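/- For every N ≥ 1 and every tripartite Bell functional M = (M_{xyz})_{x,y,z=1}^N, the supremum of |∑ M_{xyz} γ_{xyz}| over tripartite general bilocal correlations γ is at most √(2N) times its supremum over tripartite fully local correlations; consequently it is also at most √(2N) times its supremum over tripartite quantum correlations. -/

import Mathlib

open scoped BigOperators
open Kronecker

noncomputable section

namespace BellCorr

/-- The sign (±1) value associated to a boolean outcome. -/
def sgn (b : Bool) : ℝ := if b then 1 else -1

/-- A tripartite behaviour with `N` inputs and 2 outputs (encoded by `Bool`) per party. -/
def IsBeh3 {N : ℕ} (P : Fin N → Fin N → Fin N → Bool → Bool → Bool → ℝ) : Prop :=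
  (∀ x y z a b c, 0 ≤ P x y z a b c) ∧
  ∀ x y z, (∑ a, ∑ b, ∑ c, P x y z a b c) = 1

/-- A bipartite behaviour with `N` inputs and 2 outputs per party. -/
def IsBeh2 {N : ℕ} (Q : Fin N → Fin N → Bool → Bool → ℝ) : Prop :=
  (∀ x y a b, 0 ≤ Q x y a b) ∧ ∀ x y, (∑ a, ∑ b, Q x y a b) = 1

/-- A single-party behaviour with `N` inputs and 2 outputs. -/
def IsBeh1 {N : ℕ} (R : Fin N → Bool → ℝ) : Prop :=
  (∀ x a, 0 ≤ R x a) ∧ ∀ x, (∑ a, R x a) = 1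

/-- The correlation of a tripartite behaviour with ±1 outputs. -/
def corr3 {N : ℕ} (P : Fin N → Fin N → Fin N → Bool → Bool → Bool → ℝ) :
    Fin N → Fin N → Fin N → ℝ :=
  fun x y z => ∑ a, ∑ b, ∑ c, sgn a * sgn b * sgn c * P x y z a b c

/-- A bilocal product term: the product of an arbitrary behaviour on two of the three
parties with an arbitrary behaviour on the remaining party (any bipartition). -/
def BilocTerm3 {N : ℕ} (P : Fin N → Fin N → Fin N → Bool → Bool → Bool → ℝ) : Prop :=
  (∃ Q R, IsBeh2 Q ∧ IsBeh1 R ∧ ∀ x y z a b c, P x y z a b c = Q x y a b * R z c) ∨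
  (∃ Q R, IsBeh2 Q ∧ IsBeh1 R ∧ ∀ x y z a b c, P x y z a b c = Q y z b c * R x a) ∨
  (∃ Q R, IsBeh2 Q ∧ IsBeh1 R ∧ ∀ x y z a b c, P x y z a b c = Q x z a c * R y b)

/-- A tripartite general bilocal behaviour: a convex combination of bilocal product
terms (with no non-signalling restriction on the bipartite factors). -/
def GenBiloc3 {N : ℕ} (P : Fin N → Fin N → Fin N → Bool → Bool → Bool → ℝ) : Prop :=
  ∃ (m : ℕ) (p : Fin m → ℝ)
    (Ps : Fin m → Fin N → Fin N → Fin N → Bool → Bool → Bool → ℝ),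
    (∀ j, 0 ≤ p j) ∧ (∑ j, p j) = 1 ∧ (∀ j, BilocTerm3 (Ps j)) ∧
    ∀ x y z a b c, P x y z a b c = ∑ j, p j * Ps j x y z a b c

/-- A vector with all entries equal to `1` or `-1`. -/
def PM1 {N : ℕ} (v : Fin N → ℝ) : Prop := ∀ x, v x = 1 ∨ v x = -1

/-- The generators of the set of tripartite general bilocal correlations: tensors of the
three forms `(α_{xy} c_z)`, `(β_{yz} a_x)`, `(δ_{xz} b_y)`, where the bipartite factor has
all entries of absolute value at most 1 (i.e. it is a bipartite non-signalling correlation)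
and the single-party factor is ±1-valued. -/
def BilocCorrGenerators (N : ℕ) : Set (Fin N → Fin N → Fin N → ℝ) :=
  {γ | ∃ (α : Fin N → Fin N → ℝ) (c : Fin N → ℝ), (∀ x y, |α x y| ≤ 1) ∧ PM1 c ∧
        ∀ x y z, γ x y z = α x y * c z} ∪
  {γ | ∃ (β : Fin N → Fin N → ℝ) (a : Fin N → ℝ), (∀ y z, |β y z| ≤ 1) ∧ PM1 a ∧
        ∀ x y z, γ x y z = β y z * a x} ∪
  {γ | ∃ (δ : Fin N → Fin N → ℝ) (b : Fin N → ℝ), (∀ x z, |δ x z| ≤ 1) ∧ PM1 b ∧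
        ∀ x y z, γ x y z = δ x z * b y}

/-- A tripartite general bilocal correlation: an element of the convex hull of the tensors
of the three forms `(α_{xy} c_z)`, `(β_{yz} a_x)`, `(δ_{xz} b_y)`. -/
def IsBilocCorr3 {N : ℕ} (γ : Fin N → Fin N → Fin N → ℝ) : Prop :=
  γ ∈ convexHull ℝ (BilocCorrGenerators N)

/-- A tripartite fully local correlation:
an element of the convex hull of `{(a_x b_y c_z) : a_x, b_y, c_z = ±1}`. -/
def IsLocalCorr3 {N : ℕ} (γ : Fin N → Fin N → Fin N → ℝ) : Prop :=
  γ ∈ convexHull ℝ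
    {γ' : Fin N → Fin N → Fin N → ℝ | ∃ a b c : Fin N → ℝ, PM1 a ∧ PM1 b ∧ PM1 c ∧
      ∀ x y z, γ' x y z = a x * b y * c z}

/-- A self-adjoint operator of (operator) norm at most 1 on `ℂ^d`, as a matrix: it is
Hermitian and it is an ℓ₂-contraction. -/
def IsContraction {d : ℕ} (A : Matrix (Fin d) (Fin d) ℂ) : Prop :=
  A.IsHermitian ∧
  ∀ v : Fin d → ℂ, (∑ i, Complex.normSq (A.mulVec v i)) ≤ ∑ i, Complex.normSq (v i)

/-- A tripartite quantum correlation: `γ x y z = ⟨ψ| A_x ⊗ B_y ⊗ C_z |ψ⟩` for some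
finite-dimensional Hilbert spaces `ℂ^{d₁}, ℂ^{d₂}, ℂ^{d₃}`, a unit vector `ψ` in their
tensor product, and self-adjoint operators `A_x, B_y, C_z` of norm at most 1. -/
def IsQuantumCorr3 {N : ℕ} (γ : Fin N → Fin N → Fin N → ℝ) : Prop :=
  ∃ (d₁ d₂ d₃ : ℕ) (ψ : Fin d₁ × Fin d₂ × Fin d₃ → ℂ)
    (A : Fin N → Matrix (Fin d₁) (Fin d₁) ℂ)
    (B : Fin N → Matrix (Fin d₂) (Fin d₂) ℂ)
    (C : Fin N → Matrix (Fin d₃) (Fin d₃) ℂ),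
    (∑ i, Complex.normSq (ψ i)) = 1 ∧
    (∀ x, IsContraction (A x)) ∧ (∀ y, IsContraction (B y)) ∧ (∀ z, IsContraction (C z)) ∧
    ∀ x y z, ((γ x y z : ℝ) : ℂ) =
      ∑ i, ∑ j, (starRingEnd ℂ) (ψ i) * ((A x ⊗ₖ (B y ⊗ₖ C z)) i j) * ψ j

/-- The value `⟨M, γ⟩ = ∑_{x,y,z} M_{xyz} γ_{xyz}` of a Bell functional on a correlation. -/
def bellVal {N : ℕ} (M γ : Fin N → Fin N → Fin N → ℝ) : ℝ :=
  ∑ x, ∑ y, ∑ z, M x y z * γ x y z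

/-- `ω_{Q³_cor}(M)`: the supremum of `|⟨M, γ⟩|` over tripartite quantum correlations. -/
def qSup {N : ℕ} (M : Fin N → Fin N → Fin N → ℝ) : ℝ :=
  sSup {v | ∃ γ, IsQuantumCorr3 γ ∧ v = |bellVal M γ|}

/-- `ω_{BL³_cor}(M)`: the supremum of `|⟨M, γ⟩|` over tripartite general bilocal
correlations. -/
def bSup {N : ℕ} (M : Fin N → Fin N → Fin N → ℝ) : ℝ :=
  sSup {v | ∃ γ, IsBilocCorr3 γ ∧ v = |bellVal M γ|}

/-- `ω_{L³_cor}(M)`: the supremum of `|⟨M, γ⟩|` over tripartite fully local correlations. -/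
def lSup {N : ℕ} (M : Fin N → Fin N → Fin N → ℝ) : ℝ :=
  sSup {v | ∃ γ, IsLocalCorr3 γ ∧ v = |bellVal M γ|}

/-! ### Sign utilities -/

lemma sgn_eq_or (b : Bool) : sgn b = 1 ∨ sgn b = -1 := by cases b <;> simp [sgn]

lemma sgn_mul_self (b : Bool) : sgn b * sgn b = 1 := by cases b <;> norm_num [sgn]

lemma pm1_sgn {N : ℕ} (c : Fin N → Bool) : PM1 (fun y => sgn (c y)) := fun y => sgn_eq_or (c y)

def psgn (t : ℝ) : ℝ := if 0 ≤ t then 1 else -1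

lemma psgn_eq_or (t : ℝ) : psgn t = 1 ∨ psgn t = -1 := by unfold psgn; split <;> simp

lemma psgn_of_nonneg {t : ℝ} (h : 0 ≤ t) : psgn t = 1 := if_pos h

lemma psgn_of_neg {t : ℝ} (h : t < 0) : psgn t = -1 := if_neg (not_le.mpr h)

lemma sgn_decide_mul (t : ℝ) : sgn (decide (0 ≤ t)) * t = |t| := by
  by_cases h : 0 ≤ t
  · simp [sgn, h, abs_of_nonneg h]
  · simp [sgn, h, abs_of_neg (lt_of_not_ge h)]

lemma sgn_beq (a b : Bool) : sgn (a == b) = sgn a * sgn b := by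
  cases a <;> cases b <;> norm_num [sgn]

lemma sgn_not (a : Bool) : sgn (!a) = - sgn a := by cases a <;> norm_num [sgn]

lemma F1 (m : ℕ) : (16:ℝ)^(m+1) ≤ 4*(m+1)*((m+1).centralBinom : ℝ)^2 := by
  induction m with
  | zero =>
    have : ((1:ℕ).centralBinom : ℝ) = 2 := by norm_num [Nat.centralBinom]
    rw [this]; norm_num
  | succ m ih =>
    set C1 : ℝ := ((m+1).centralBinom : ℝ) with hC1
    set C2 : ℝ := ((m+1+1).centralBinom : ℝ) with hC2
    have hpos2 : (0:ℝ) < (m:ℝ) + 2 := by positivity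
    have hrecR : ((m:ℝ)+1+1) * C2 = 2 * (2*(m+1)+1) * C1 := by
      rw [hC1, hC2]; exact_mod_cast congrArg (fun k : ℕ => (k:ℝ)) (Nat.succ_mul_centralBinom_succ (m+1))
    have h1 : ((m:ℝ)+2) * C2 = (4*m+6) * C1 := by linarith [hrecR]
    rw [← mul_le_mul_iff_right₀ hpos2]
    have e1 : ((m:ℝ)+2) * (4*(↑(m+1)+1)*C2^2) = 4*((4*(m:ℝ)+6) * C1)^2 := by
      push_cast
      linear_combination (4*(((m:ℝ)+2)*C2 + (4*(m:ℝ)+6)*C1)) * h1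
    rw [e1]
    have e2 : ((m:ℝ)+2) * (16:ℝ)^(m+1+1) = 16*((m:ℝ)+2) * 16^(m+1) := by
      rw [pow_succ]; ring
    rw [e2]
    have e3 : 16*((m:ℝ)+2) * (16:ℝ)^(m+1) ≤ 16*((m:ℝ)+2) * (4*(m+1)*C1^2) := by
      have h : (0:ℝ) ≤ 16*((m:ℝ)+2) := by positivity
      exact mul_le_mul_of_nonneg_left ih h
    refine e3.trans ?_
    nlinarith [sq_nonneg C1]

/-- The key binomial inequality: `4^n ≤ 2(n+1) * C(n, ⌊n/2⌋)²`. -/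
lemma BIN (n : ℕ) : (4:ℝ)^n ≤ 2*(n+1)*((n.choose (n/2) : ℝ))^2 := by
  rcases Nat.even_or_odd n with ⟨m, hm⟩ | ⟨m, hm⟩
  · subst hm
    have hdiv : (m + m) / 2 = m := by omega
    rw [hdiv]
    have hch : (m+m).choose m = m.centralBinom := by rw [Nat.centralBinom]; ring_nf
    rw [hch]
    have h16 : (4:ℝ)^(m+m) = 16^m := by
      rw [← two_mul, pow_mul]; norm_num
    rw [h16]
    rcases Nat.eq_zero_or_pos m with h0 | hp
    · subst h0; norm_num [Nat.centralBinom]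
    · obtain ⟨k, hk⟩ : ∃ k, m = k + 1 := ⟨m - 1, by omega⟩
      subst hk
      have hF := F1 k
      push_cast at hF ⊢
      nlinarith [hF, sq_nonneg (((k+1).centralBinom : ℝ))]
  · subst hm
    have hdiv : (2*m + 1) / 2 = m := by omega
    rw [hdiv]
    have h2 : (2*m+1+1).choose (m+1) = (2*m+1).choose m + (2*m+1).choose (m+1) :=
      Nat.choose_succ_succ (2*m+1) m
    have h3 : (2*m+1).choose (m+1) = (2*m+1).choose m := by
      have h := Nat.choose_symm (n := 2*m+1) (k := m+1) (by omega)
      simpa [show 2*m+1-(m+1) = m by omega] using h.symm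
    have hch : (m+1).centralBinom = 2 * (2*m+1).choose m := by
      rw [Nat.centralBinom]
      rw [show 2*(m+1) = 2*m+1+1 by ring, h2, h3]
      omega
    have hchR : ((m+1).centralBinom : ℝ) = 2 * ((2*m+1).choose m : ℝ) := by exact_mod_cast hch
    have hF := F1 m
    rw [hchR] at hF
    have h16 : (4:ℝ)^(2*m+1) = 4 * 16^m := by
      rw [pow_succ, pow_mul]; norm_num [mul_comm]
    rw [h16]
    have hps : (16:ℝ)^(m+1) = 16 * 16^m := by rw [pow_succ]; ring
    rw [hps] at hF
    push_cast at hF ⊢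
    nlinarith [hF, sq_nonneg (((2*m+1).choose m : ℝ))]
/-! ### Counting and cube identities -/

lemma sum_sgn_eq {N : ℕ} (s : Finset (Fin N)) (c : Fin N → Bool) :
    ∑ y ∈ s, sgn (c y)
      = 2 * ((s.filter fun y => c y = true).card : ℝ) - (s.card : ℝ) := by
  rw [← Finset.sum_filter_add_sum_filter_not s (fun y => c y = true)]
  have h1 : ∑ y ∈ s.filter (fun y => c y = true), sgn (c y)
      = ((s.filter fun y => c y = true).card : ℝ) := by
    rw [Finset.sum_congr rfl (fun y hy => ?_), Finset.sum_const, nsmul_eq_mul, mul_one]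
    have := (Finset.mem_filter.mp hy).2
    simp [sgn, this]
  have h2 : ∑ y ∈ s.filter (fun y => ¬ c y = true), sgn (c y)
      = -((s.filter fun y => ¬ c y = true).card : ℝ) := by
    rw [Finset.sum_congr rfl (fun y hy => ?_), Finset.sum_const, nsmul_eq_mul, mul_neg_one]
    have := (Finset.mem_filter.mp hy).2
    simp [sgn, this]
  rw [h1, h2]
  have h3 := Finset.card_filter_add_card_filter_not (s := s) (fun y => c y = true)
  have h3R : ((s.filter fun y => c y = true).card : ℝ)
      + ((s.filter fun y => ¬ c y = true).card : ℝ) = (s.card : ℝ) := by exact_mod_cast h3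
  linarith

lemma count_balanced {N : ℕ} (y₀ : Fin (N+1)) :
    ((Finset.univ.filter (fun c : Fin (N+1) → Bool =>
      ((Finset.univ.erase y₀).filter (fun y => c y = true)).card = N / 2)).card : ℝ)
    = 2 * (N.choose (N/2) : ℝ) := by
  have hcard : (Finset.univ.filter (fun c : Fin (N+1) → Bool =>
      ((Finset.univ.erase y₀).filter (fun y => c y = true)).card = N / 2)).card
      = ((Finset.univ : Finset Bool) ×ˢ ((Finset.univ.erase y₀).powersetCard (N/2))).card := by
    refine Finset.card_bij'
      (fun c _ => (c y₀, (Finset.univ.erase y₀).filter (fun y => c y = true)))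
      (fun p _ => (fun y => if y = y₀ then p.1 else decide (y ∈ p.2))) ?_ ?_ ?_ ?_
    · intro c hc
      rw [Finset.mem_product]
      refine ⟨Finset.mem_univ _, ?_⟩
      rw [Finset.mem_powersetCard]
      exact ⟨Finset.filter_subset _ _, (Finset.mem_filter.mp hc).2⟩
    · intro p hp
      rw [Finset.mem_product, Finset.mem_powersetCard] at hp
      obtain ⟨-, hsub, hcardp⟩ := hp
      rw [Finset.mem_filter]
      refine ⟨Finset.mem_univ _, ?_⟩
      have : ((Finset.univ.erase y₀).filter
          (fun y => (if y = y₀ then p.1 else decide (y ∈ p.2)) = true)) = p.2 := by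
        ext y
        rw [Finset.mem_filter]
        constructor
        · rintro ⟨hy, hy2⟩
          have hne : y ≠ y₀ := Finset.ne_of_mem_erase hy
          rw [if_neg hne] at hy2
          exact of_decide_eq_true hy2
        · intro hy
          have hne : y ≠ y₀ := Finset.ne_of_mem_erase (hsub hy)
          exact ⟨hsub hy, by rw [if_neg hne]; exact decide_eq_true hy⟩
      rw [this, hcardp]
    · intro c hc
      dsimp only
      funext y
      by_cases hy : y = y₀
      · rw [hy]; simp
      · rw [if_neg hy]
        by_cases hcy : c y = true
        · simp [Finset.mem_filter, Finset.mem_erase, hy, hcy]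
        · simp [Finset.mem_filter, Finset.mem_erase, hy, hcy]
    · intro p hp
      rw [Finset.mem_product, Finset.mem_powersetCard] at hp
      obtain ⟨-, hsub, hcardp⟩ := hp
      dsimp only
      refine Prod.ext (by simp) ?_
      simp only
      ext y
      rw [Finset.mem_filter]
      constructor
      · rintro ⟨hy, hy2⟩
        have hne : y ≠ y₀ := Finset.ne_of_mem_erase hy
        rw [if_neg hne] at hy2
        exact of_decide_eq_true hy2
      · intro hy
        have hne : y ≠ y₀ := Finset.ne_of_mem_erase (hsub hy)
        exact ⟨hsub hy, by rw [if_neg hne]; exact decide_eq_true hy⟩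
  rw [hcard, Finset.card_product, Finset.card_powersetCard,
    Finset.card_erase_of_mem (Finset.mem_univ _)]
  simp [Fintype.card_fin]
lemma psgn_branch (T N : ℕ) :
    psgn ((2*(T:ℝ) - N) + 1) - psgn ((2*(T:ℝ) - N) - 1)
      = if T = N/2 then (2:ℝ) else 0 := by
  by_cases hq : T = N/2
  · rw [if_pos hq]
    have h : 2*T = N ∨ 2*T + 1 = N := by omega
    rcases h with h | h
    · have hu : 2*(T:ℝ) - N = 0 := by
        have : ((2*T : ℕ):ℝ) = (N:ℝ) := by exact_mod_cast congrArg (fun k : ℕ => (k:ℝ)) h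
        push_cast at this ⊢; linarith
      rw [hu, psgn_of_nonneg (by norm_num : (0:ℝ) ≤ 0 + 1), psgn_of_neg (by norm_num : (0:ℝ) - 1 < 0)]
      norm_num
    · have hu : 2*(T:ℝ) - N = -1 := by
        have : ((2*T + 1 : ℕ):ℝ) = (N:ℝ) := by exact_mod_cast congrArg (fun k : ℕ => (k:ℝ)) h
        push_cast at this ⊢; linarith
      rw [hu, psgn_of_nonneg (by norm_num : (0:ℝ) ≤ -1 + 1), psgn_of_neg (by norm_num : (-1:ℝ) - 1 < 0)]
      norm_num
  · rw [if_neg hq]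
    have h : 2*T ≥ N+1 ∨ 2*T + 2 ≤ N := by omega
    rcases h with h | h
    · have hu : (1:ℝ) ≤ 2*(T:ℝ) - N := by
        have : ((N:ℝ) + 1) ≤ ((2*T : ℕ):ℝ) := by exact_mod_cast h
        push_cast at this; linarith
      rw [psgn_of_nonneg (by linarith), psgn_of_nonneg (by linarith)]
      norm_num
    · have hu : 2*(T:ℝ) - N ≤ -2 := by
        have : ((2*T:ℕ):ℝ) + 2 ≤ (N:ℝ) := by exact_mod_cast h
        push_cast at this; linarith
      rw [psgn_of_neg (by linarith), psgn_of_neg (by linarith)]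
      norm_num

lemma const_sum {N : ℕ} (y₀ : Fin (N+1)) :
    ∑ c : Fin (N+1) → Bool, psgn (∑ y, sgn (c y)) * sgn (c y₀)
      = 2 * (N.choose (N/2) : ℝ) := by
  set F : (Fin (N+1) → Bool) → ℝ := fun c => psgn (∑ y, sgn (c y)) * sgn (c y₀) with hF
  set ψ : (Fin (N+1) → Bool) → (Fin (N+1) → Bool) :=
    fun c => Function.update c y₀ (!(c y₀)) with hψ
  have hinv : Function.Involutive ψ := by
    intro c; funext y
    by_cases hy : y = y₀
    · subst hy; simp [hψ, Function.update_self]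
    · simp [hψ, Function.update_of_ne hy]
  have h2K : ∑ c, F (ψ c) = ∑ c, F c := by
    have := Equiv.sum_comp (Function.Involutive.toPerm ψ hinv) F
    simpa [Function.Involutive.coe_toPerm] using this
  have hsplit : ∑ c, (F c + F (ψ c)) = 2 * ∑ c, F c := by
    rw [Finset.sum_add_distrib, h2K]; ring
  have hpt : ∀ c : Fin (N+1) → Bool, F c + F (ψ c)
      = if ((Finset.univ.erase y₀).filter (fun y => c y = true)).card = N/2
        then (2:ℝ) else 0 := by
    intro c
    set T : ℕ := ((Finset.univ.erase y₀).filter (fun y => c y = true)).card with hT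
    have hu : ∑ y ∈ Finset.univ.erase y₀, sgn (c y) = 2*(T:ℝ) - N := by
      rw [sum_sgn_eq, Finset.card_erase_of_mem (Finset.mem_univ _), Finset.card_univ,
        Fintype.card_fin, hT]
      norm_num
    have hSc : ∑ y, sgn (c y) = (2*(T:ℝ) - N) + sgn (c y₀) := by
      rw [← Finset.sum_erase_add Finset.univ _ (Finset.mem_univ y₀), hu]
    have h2y : sgn (ψ c y₀) = - sgn (c y₀) := by
      rw [hψ]; dsimp only; rw [Function.update_self, sgn_not]
    have hSψ : ∑ y, sgn (ψ c y) = (2*(T:ℝ) - N) - sgn (c y₀) := by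
      rw [← Finset.sum_erase_add Finset.univ _ (Finset.mem_univ y₀)]
      have h1 : ∑ y ∈ Finset.univ.erase y₀, sgn (ψ c y)
          = ∑ y ∈ Finset.univ.erase y₀, sgn (c y) := by
        refine Finset.sum_congr rfl (fun y hy => ?_)
        rw [hψ]; dsimp only
        rw [Function.update_of_ne (Finset.ne_of_mem_erase hy)]
      rw [h1, hu, h2y]; ring
    have hFF : F c + F (ψ c)
        = psgn ((2*(T:ℝ) - N) + sgn (c y₀)) * sgn (c y₀)
          - psgn ((2*(T:ℝ) - N) - sgn (c y₀)) * sgn (c y₀) := by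
      rw [hF]; dsimp only; rw [hSc, hSψ, h2y]; ring
    rw [hFF]
    cases hc : c y₀
    · have hsgn : sgn false = -1 := by norm_num [sgn]
      rw [hsgn, show (2*(T:ℝ) - N) + -1 = (2*(T:ℝ) - N) - 1 by ring,
          show (2*(T:ℝ) - N) - -1 = (2*(T:ℝ) - N) + 1 by ring, ← psgn_branch T N]
      ring
    · have hsgn : sgn true = 1 := by norm_num [sgn]
      rw [hsgn, ← psgn_branch T N]
      ring
  have hsum : ∑ c, (F c + F (ψ c)) = (2 * (N.choose (N/2) : ℝ)) * 2 := by
    calc ∑ c, (F c + F (ψ c))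
        = ∑ c : Fin (N+1) → Bool, (if ((Finset.univ.erase y₀).filter
              (fun y => c y = true)).card = N/2 then (2:ℝ) else 0) :=
          Finset.sum_congr rfl (fun c _ => hpt c)
      _ = ∑ c ∈ Finset.univ.filter (fun c : Fin (N+1) → Bool =>
              ((Finset.univ.erase y₀).filter (fun y => c y = true)).card = N/2), (2:ℝ) := by
          rw [Finset.sum_filter]
      _ = ((Finset.univ.filter (fun c : Fin (N+1) → Bool =>
              ((Finset.univ.erase y₀).filter (fun y => c y = true)).card = N/2)).card : ℝ) * 2 := by
          rw [Finset.sum_const, nsmul_eq_mul]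
      _ = (2 * (N.choose (N/2) : ℝ)) * 2 := by rw [count_balanced y₀]
  rw [hsum] at hsplit
  linarith

lemma id_sum {N : ℕ} (b : Fin N → Bool) (y₀ : Fin N) :
    ∑ c : Fin N → Bool, psgn (∑ y, sgn (b y) * sgn (c y)) * sgn (c y₀)
      = sgn (b y₀) * ∑ c : Fin N → Bool, psgn (∑ y, sgn (c y)) * sgn (c y₀) := by
  set φ : (Fin N → Bool) → (Fin N → Bool) := fun c => fun y => b y == c y with hφ
  have hinv : Function.Involutive φ := by
    intro c; funext y
    rw [hφ]; dsimp only
    cases hb : b y <;> cases hc : c y <;> simp [hb, hc]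
  have hkey : ∀ c : Fin N → Bool,
      psgn (∑ y, sgn (b y) * sgn (φ c y)) * sgn (φ c y₀)
        = sgn (b y₀) * (psgn (∑ y, sgn (c y)) * sgn (c y₀)) := by
    intro c
    have h1 : ∀ y, sgn (b y) * sgn (φ c y) = sgn (c y) := by
      intro y
      rw [hφ]; dsimp only
      rw [sgn_beq, ← mul_assoc, sgn_mul_self, one_mul]
    have h2 : sgn (φ c y₀) = sgn (b y₀) * sgn (c y₀) := by
      rw [hφ]; dsimp only; rw [sgn_beq]
    rw [Finset.sum_congr rfl (fun y _ => h1 y), h2]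
    ring
  have hsum : ∑ c : Fin N → Bool, psgn (∑ y, sgn (b y) * sgn (c y)) * sgn (c y₀)
      = ∑ c : Fin N → Bool, psgn (∑ y, sgn (b y) * sgn (φ c y)) * sgn (φ c y₀) := by
    have := Equiv.sum_comp (Function.Involutive.toPerm φ hinv)
      (fun c : Fin N → Bool => psgn (∑ y, sgn (b y) * sgn (c y)) * sgn (c y₀))
    simp only [Function.Involutive.coe_toPerm] at this
    exact this.symm
  rw [hsum, Finset.sum_congr rfl (fun c _ => hkey c), ← Finset.mul_sum]
/-- The key matrix inequality: if all sign-sign evaluations of `T` are bounded by `L`,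
then the entrywise ℓ¹ norm of `T` is at most `√(2N)·L`. -/
lemma key_ineq {N : ℕ} (T : Fin N → Fin N → ℝ) (L : ℝ) (hL0 : 0 ≤ L)
    (hL : ∀ u v : Fin N → ℝ, PM1 u → PM1 v → |∑ x, ∑ y, T x y * u x * v y| ≤ L) :
    ∑ x, ∑ y, |T x y| ≤ Real.sqrt (2*N) * L := by
  cases N with
  | zero =>
    simp only [Finset.univ_eq_empty, Finset.sum_empty, Nat.cast_zero, mul_zero, Real.sqrt_zero]
    positivity
  | succ n =>
    set C : ℝ := (n.choose (n/2) : ℝ) with hC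
    have hCpos : 0 < C := by
      rw [hC]; exact_mod_cast Nat.choose_pos (Nat.div_le_self n 2)
    set bf : Fin (n+1) → Fin (n+1) → Bool := fun x y => decide (0 ≤ T x y) with hbf
    have hagg : ∀ x y : Fin (n+1),
        ∑ c : Fin (n+1) → Bool, psgn (∑ y', sgn (bf x y') * sgn (c y')) * sgn (c y)
          = sgn (bf x y) * (2*C) := by
      intro x y
      rw [id_sum (bf x) y, const_sum y]
    have inner : ∀ x y : Fin (n+1),
        ∑ c : Fin (n+1) → Bool, T x y * psgn (∑ y', sgn (bf x y') * sgn (c y')) * sgn (c y)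
          = |T x y| * (2*C) := by
      intro x y
      calc ∑ c : Fin (n+1) → Bool, T x y * psgn (∑ y', sgn (bf x y') * sgn (c y')) * sgn (c y)
          = T x y * ∑ c : Fin (n+1) → Bool,
              psgn (∑ y', sgn (bf x y') * sgn (c y')) * sgn (c y) := by
            rw [Finset.mul_sum]
            exact Finset.sum_congr rfl (fun c _ => by ring)
        _ = T x y * (sgn (bf x y) * (2*C)) := by rw [hagg x y]
        _ = |T x y| * (2*C) := by
            rw [hbf]; dsimp only
            rw [← sgn_decide_mul (T x y)]; ring
    have main : ∑ c : Fin (n+1) → Bool,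
        (∑ x, ∑ y, T x y * psgn (∑ y', sgn (bf x y') * sgn (c y')) * sgn (c y))
          = (∑ x, ∑ y, |T x y|) * (2*C) := by
      calc ∑ c : Fin (n+1) → Bool, (∑ x, ∑ y, T x y * psgn (∑ y', sgn (bf x y') * sgn (c y')) * sgn (c y))
          = ∑ x, ∑ c : Fin (n+1) → Bool, (∑ y, T x y * psgn (∑ y', sgn (bf x y') * sgn (c y')) * sgn (c y)) :=
            Finset.sum_comm
        _ = ∑ x, ∑ y, ∑ c : Fin (n+1) → Bool, T x y * psgn (∑ y', sgn (bf x y') * sgn (c y')) * sgn (c y) :=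
            Finset.sum_congr rfl (fun x _ => Finset.sum_comm)
        _ = ∑ x, ∑ y, |T x y| * (2*C) :=
            Finset.sum_congr rfl (fun x _ => Finset.sum_congr rfl (fun y _ => inner x y))
        _ = (∑ x, ∑ y, |T x y|) * (2*C) := by
            rw [Finset.sum_mul]
            exact Finset.sum_congr rfl (fun x _ => by rw [Finset.sum_mul])
    have hbound : ∀ c : Fin (n+1) → Bool,
        (∑ x, ∑ y, T x y * psgn (∑ y', sgn (bf x y') * sgn (c y')) * sgn (c y)) ≤ L := by
      intro c
      exact (le_abs_self _).trans
        (hL (fun x => psgn (∑ y', sgn (bf x y') * sgn (c y'))) (fun y => sgn (c y))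
          (fun x => psgn_eq_or _) (pm1_sgn c))
    have hsum_le : (∑ x, ∑ y, |T x y|) * (2*C) ≤ 2^(n+1) * L := by
      rw [← main]
      refine le_trans (Finset.sum_le_sum (fun c _ => hbound c)) ?_
      rw [Finset.sum_const, nsmul_eq_mul, Finset.card_univ, Fintype.card_fun]
      simp only [Fintype.card_bool, Fintype.card_fin]
      push_cast
      exact le_rfl
    have hC2 : (2:ℝ)^n / C ≤ Real.sqrt (2*(n+1)) := by
      have h1 : (0:ℝ) ≤ 2^n / C := by positivity
      have h2 : (0:ℝ) ≤ 2*((n:ℝ)+1) := by positivity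
      rw [Real.le_sqrt h1 h2, div_pow, div_le_iff₀ (by positivity : (0:ℝ) < C^2)]
      have h4 : ((2:ℝ)^n)^2 = 4^n := by
        rw [← pow_mul, mul_comm, pow_mul]; norm_num
      rw [h4]
      have := BIN n
      rw [← hC] at this
      push_cast at this ⊢
      linarith
    have hfin : ∑ x, ∑ y, |T x y| ≤ ((2:ℝ)^n / C) * L := by
      rw [div_mul_eq_mul_div, le_div_iff₀ hCpos]
      have h2p : (2:ℝ)^(n+1) = 2 * 2^n := by ring
      nlinarith [hsum_le]
    refine hfin.trans ?_
    have hcast : Real.sqrt (2*((n+1:ℕ):ℝ)) = Real.sqrt (2*((n:ℝ)+1)) := by push_cast; rfl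
    rw [hcast]
    exact mul_le_mul_of_nonneg_right hC2 hL0
/-! ### Bell value machinery -/

lemma bellVal_comb {N : ℕ} (M γ₁ γ₂ : Fin N → Fin N → Fin N → ℝ) (a b : ℝ) :
    bellVal M (a • γ₁ + b • γ₂) = a * bellVal M γ₁ + b * bellVal M γ₂ := by
  unfold bellVal
  rw [Finset.mul_sum, Finset.mul_sum, ← Finset.sum_add_distrib]
  refine Finset.sum_congr rfl (fun x _ => ?_)
  rw [Finset.mul_sum, Finset.mul_sum, ← Finset.sum_add_distrib]
  refine Finset.sum_congr rfl (fun y _ => ?_)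
  rw [Finset.mul_sum, Finset.mul_sum, ← Finset.sum_add_distrib]
  refine Finset.sum_congr rfl (fun z _ => ?_)
  simp only [Pi.add_apply, Pi.smul_apply, smul_eq_mul]
  ring

lemma hull_bellVal_bound {N : ℕ} (M : Fin N → Fin N → Fin N → ℝ)
    {S : Set (Fin N → Fin N → Fin N → ℝ)} {Cb : ℝ}
    (h : ∀ γ' ∈ S, |bellVal M γ'| ≤ Cb) :
    ∀ γ ∈ convexHull ℝ S, |bellVal M γ| ≤ Cb := by
  intro γ hγ
  have hconv : Convex ℝ {γ' : Fin N → Fin N → Fin N → ℝ | |bellVal M γ'| ≤ Cb} := by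
    intro u hu v hv a b ha hb hab
    simp only [Set.mem_setOf_eq] at hu hv ⊢
    rw [bellVal_comb]
    calc |a * bellVal M u + b * bellVal M v|
        ≤ |a * bellVal M u| + |b * bellVal M v| := abs_add_le _ _
      _ = a * |bellVal M u| + b * |bellVal M v| := by
          rw [abs_mul, abs_mul, abs_of_nonneg ha, abs_of_nonneg hb]
      _ ≤ a * Cb + b * Cb :=
          add_le_add (mul_le_mul_of_nonneg_left hu ha) (mul_le_mul_of_nonneg_left hv hb)
      _ = Cb := by rw [← add_mul, hab, one_mul]
  exact convexHull_min h hconv hγ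

lemma abs_bellVal_le_of_pointwise {N : ℕ} (M γ : Fin N → Fin N → Fin N → ℝ)
    (h : ∀ x y z, |γ x y z| ≤ 1) :
    |bellVal M γ| ≤ ∑ x, ∑ y, ∑ z, |M x y z| := by
  unfold bellVal
  refine le_trans (Finset.abs_sum_le_sum_abs _ _) (Finset.sum_le_sum (fun x _ => ?_))
  refine le_trans (Finset.abs_sum_le_sum_abs _ _) (Finset.sum_le_sum (fun y _ => ?_))
  refine le_trans (Finset.abs_sum_le_sum_abs _ _) (Finset.sum_le_sum (fun z _ => ?_))
  rw [abs_mul]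
  calc |M x y z| * |γ x y z| ≤ |M x y z| * 1 :=
        mul_le_mul_of_nonneg_left (h x y z) (abs_nonneg _)
    _ = |M x y z| := mul_one _

lemma pm1_abs {N : ℕ} {v : Fin N → ℝ} (h : PM1 v) (x : Fin N) : |v x| = 1 := by
  rcases h x with h' | h' <;> rw [h'] <;> norm_num

lemma sign_tensor_local {N : ℕ} {a b c : Fin N → ℝ}
    (ha : PM1 a) (hb : PM1 b) (hc : PM1 c) :
    IsLocalCorr3 (fun x y z => a x * b y * c z) :=
  subset_convexHull ℝ _ ⟨a, b, c, ha, hb, hc, fun _ _ _ => rfl⟩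

lemma bddAbove_lSet {N : ℕ} (M : Fin N → Fin N → Fin N → ℝ) :
    BddAbove {v | ∃ γ, IsLocalCorr3 γ ∧ v = |bellVal M γ|} := by
  refine ⟨∑ x, ∑ y, ∑ z, |M x y z|, ?_⟩
  rintro v ⟨γ, hγ, rfl⟩
  refine hull_bellVal_bound M (fun γ' hγ' => ?_) γ hγ
  obtain ⟨a, b, c, ha, hb, hc, he⟩ := hγ'
  refine abs_bellVal_le_of_pointwise M γ' (fun x y z => ?_)
  rw [he x y z, abs_mul, abs_mul, pm1_abs ha, pm1_abs hb, pm1_abs hc]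
  norm_num

lemma sign_le_lSup {N : ℕ} (M : Fin N → Fin N → Fin N → ℝ) {a b c : Fin N → ℝ}
    (ha : PM1 a) (hb : PM1 b) (hc : PM1 c) :
    |bellVal M (fun x y z => a x * b y * c z)| ≤ lSup M :=
  le_csSup (bddAbove_lSet M) ⟨_, sign_tensor_local ha hb hc, rfl⟩

lemma lSup_nonneg {N : ℕ} (M : Fin N → Fin N → Fin N → ℝ) : 0 ≤ lSup M :=
  le_trans (abs_nonneg _)
    (sign_le_lSup M (a := fun _ => 1) (b := fun _ => 1) (c := fun _ => 1)
      (fun _ => Or.inl rfl) (fun _ => Or.inl rfl) (fun _ => Or.inl rfl))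
/-! ### Quantum side -/

lemma kron_contract {ι κ : Type} [Fintype ι] [Fintype κ] [DecidableEq ι] [DecidableEq κ]
    (A : Matrix ι ι ℂ) (B : Matrix κ κ ℂ)
    (hA : ∀ v : ι → ℂ, (∑ i, Complex.normSq (A.mulVec v i)) ≤ ∑ i, Complex.normSq (v i))
    (hB : ∀ v : κ → ℂ, (∑ i, Complex.normSq (B.mulVec v i)) ≤ ∑ i, Complex.normSq (v i)) :
    ∀ v : ι × κ → ℂ,
      (∑ p, Complex.normSq ((A ⊗ₖ B).mulVec v p)) ≤ ∑ p, Complex.normSq (v p) := by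
  intro v
  have hmv : ∀ i j, (A ⊗ₖ B).mulVec v (i, j)
      = A.mulVec (fun k => B.mulVec (fun l => v (k, l)) j) i := by
    intro i j
    calc (A ⊗ₖ B).mulVec v (i, j)
        = ∑ k, ∑ l, (A i k * B j l) * v (k, l) := by
          simp only [Matrix.mulVec, dotProduct]
          rw [Fintype.sum_prod_type]
          exact Finset.sum_congr rfl (fun k _ => Finset.sum_congr rfl (fun l _ => by
            rw [Matrix.kroneckerMap_apply]))
      _ = ∑ k, A i k * (∑ l, B j l * v (k, l)) := by
          refine Finset.sum_congr rfl (fun k _ => ?_)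
          rw [Finset.mul_sum]
          exact Finset.sum_congr rfl (fun l _ => by ring)
      _ = A.mulVec (fun k => B.mulVec (fun l => v (k, l)) j) i := by
          simp only [Matrix.mulVec, dotProduct]
  calc ∑ p, Complex.normSq ((A ⊗ₖ B).mulVec v p)
      = ∑ i, ∑ j, Complex.normSq (A.mulVec (fun k => B.mulVec (fun l => v (k, l)) j) i) := by
        rw [Fintype.sum_prod_type]
        exact Finset.sum_congr rfl (fun i _ => Finset.sum_congr rfl (fun j _ => by rw [hmv i j]))
    _ = ∑ j, ∑ i, Complex.normSq (A.mulVec (fun k => B.mulVec (fun l => v (k, l)) j) i) :=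
        Finset.sum_comm
    _ ≤ ∑ j, ∑ k, Complex.normSq (B.mulVec (fun l => v (k, l)) j) :=
        Finset.sum_le_sum (fun j _ => hA _)
    _ = ∑ k, ∑ j, Complex.normSq (B.mulVec (fun l => v (k, l)) j) := Finset.sum_comm
    _ ≤ ∑ k, ∑ l, Complex.normSq (v (k, l)) := Finset.sum_le_sum (fun k _ => hB _)
    _ = ∑ p, Complex.normSq (v p) := by rw [Fintype.sum_prod_type]

lemma quantum_pointwise {N : ℕ} {γ : Fin N → Fin N → Fin N → ℝ}
    (h : IsQuantumCorr3 γ) : ∀ x y z, |γ x y z| ≤ 1 := by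
  obtain ⟨d₁, d₂, d₃, ψ, A, B, C, hψ, hA, hB, hC, hcorr⟩ := h
  intro x y z
  set T : Matrix (Fin d₁ × Fin d₂ × Fin d₃) (Fin d₁ × Fin d₂ × Fin d₃) ℂ
    := A x ⊗ₖ (B y ⊗ₖ C z) with hT
  have hcontr : (∑ p, Complex.normSq (T.mulVec ψ p)) ≤ ∑ p, Complex.normSq (ψ p) :=
    kron_contract _ _ (hA x).2 (kron_contract _ _ (hB y).2 (hC z).2) ψ
  have heq : ((γ x y z : ℝ) : ℂ) = ∑ i, (starRingEnd ℂ) (ψ i) * (T.mulVec ψ i) := by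
    rw [hcorr x y z]
    refine Finset.sum_congr rfl (fun i _ => ?_)
    simp only [Matrix.mulVec, dotProduct]
    rw [Finset.mul_sum]
    exact Finset.sum_congr rfl (fun j _ => by rw [hT]; ring)
  have habs : |γ x y z| = ‖(((γ x y z : ℝ) : ℂ))‖ := by rw [Complex.norm_real, Real.norm_eq_abs]
  rw [habs, heq]
  have step1 : ‖(∑ i, (starRingEnd ℂ) (ψ i) * (T.mulVec ψ i))‖
      ≤ ∑ i, ‖ψ i‖ * ‖T.mulVec ψ i‖ := by
    refine le_trans (norm_sum_le _ _) (le_of_eq (Finset.sum_congr rfl (fun i _ => ?_)))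
    rw [norm_mul, Complex.norm_conj]
  refine step1.trans ?_
  have h1 : ∑ i, ‖ψ i‖^2 = 1 := by
    rw [← hψ]; exact Finset.sum_congr rfl (fun i _ => Complex.sq_norm _)
  have h2 : ∑ i, ‖T.mulVec ψ i‖^2 ≤ 1 := by
    calc ∑ i, ‖T.mulVec ψ i‖^2 = ∑ i, Complex.normSq (T.mulVec ψ i) :=
        Finset.sum_congr rfl (fun i _ => Complex.sq_norm _)
      _ ≤ ∑ p, Complex.normSq (ψ p) := hcontr
      _ = 1 := hψ
  have hCS := Finset.sum_mul_sq_le_sq_mul_sq Finset.univ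
    (fun i => ‖ψ i‖) (fun i => ‖T.mulVec ψ i‖)
  have hnn : (0:ℝ) ≤ ∑ i, ‖ψ i‖ * ‖T.mulVec ψ i‖ :=
    Finset.sum_nonneg (fun i _ => mul_nonneg (norm_nonneg _) (norm_nonneg _))
  nlinarith [hCS, h1, h2, hnn]

lemma sign_tensor_quantum {N : ℕ} {a b c : Fin N → ℝ}
    (ha : PM1 a) (hb : PM1 b) (hc : PM1 c) :
    IsQuantumCorr3 (fun x y z => a x * b y * c z) := by
  refine ⟨1, 1, 1, fun _ => 1,
    fun x => fun _ _ => ((a x : ℝ) : ℂ),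
    fun y => fun _ _ => ((b y : ℝ) : ℂ),
    fun z => fun _ _ => ((c z : ℝ) : ℂ), ?_, ?_, ?_, ?_, ?_⟩
  · simp
  · intro x
    constructor
    · ext i j
      erw [Matrix.conjTranspose_apply]
      simp [Matrix.conjTranspose_apply, Complex.conj_ofReal]
    · intro v
      simp only [Matrix.mulVec, dotProduct, Fin.sum_univ_one]
      rw [map_mul, Complex.normSq_ofReal]
      rcases ha x with h | h <;> rw [h] <;> norm_num
  · intro y
    constructor
    · ext i j
      erw [Matrix.conjTranspose_apply]
      simp [Matrix.conjTranspose_apply, Complex.conj_ofReal]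
    · intro v
      simp only [Matrix.mulVec, dotProduct, Fin.sum_univ_one]
      rw [map_mul, Complex.normSq_ofReal]
      rcases hb y with h | h <;> rw [h] <;> norm_num
  · intro z
    constructor
    · ext i j
      erw [Matrix.conjTranspose_apply]
      simp [Matrix.conjTranspose_apply, Complex.conj_ofReal]
    · intro v
      simp only [Matrix.mulVec, dotProduct, Fin.sum_univ_one]
      rw [map_mul, Complex.normSq_ofReal]
      rcases hc z with h | h <;> rw [h] <;> norm_num
  · intro x y z
    rw [show (Finset.univ : Finset (Fin 1 × Fin 1 × Fin 1)) = {(0, 0, 0)} from rfl]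
    simp [Matrix.kroneckerMap_apply]
    erw [Matrix.kroneckerMap_apply, Matrix.kroneckerMap_apply]
    push_cast
    ring
lemma bddAbove_qSet {N : ℕ} (M : Fin N → Fin N → Fin N → ℝ) :
    BddAbove {v | ∃ γ, IsQuantumCorr3 γ ∧ v = |bellVal M γ|} := by
  refine ⟨∑ x, ∑ y, ∑ z, |M x y z|, ?_⟩
  rintro v ⟨γ, hγ, rfl⟩
  exact abs_bellVal_le_of_pointwise M γ (quantum_pointwise hγ)

lemma sign_le_qSup {N : ℕ} (M : Fin N → Fin N → Fin N → ℝ) {a b c : Fin N → ℝ}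
    (ha : PM1 a) (hb : PM1 b) (hc : PM1 c) :
    |bellVal M (fun x y z => a x * b y * c z)| ≤ qSup M :=
  le_csSup (bddAbove_qSet M) ⟨_, sign_tensor_quantum ha hb hc, rfl⟩

lemma qSup_nonneg {N : ℕ} (M : Fin N → Fin N → Fin N → ℝ) : 0 ≤ qSup M :=
  le_trans (abs_nonneg _)
    (sign_le_qSup M (a := fun _ => 1) (b := fun _ => 1) (c := fun _ => 1)
      (fun _ => Or.inl rfl) (fun _ => Or.inl rfl) (fun _ => Or.inl rfl))

lemma lSup_le_qSup {N : ℕ} (M : Fin N → Fin N → Fin N → ℝ) : lSup M ≤ qSup M := by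
  refine Real.sSup_le ?_ (qSup_nonneg M)
  rintro v ⟨γ, hγ, rfl⟩
  refine hull_bellVal_bound M (fun γ' hγ' => ?_) γ hγ
  obtain ⟨a, b, c, ha, hb, hc, he⟩ := hγ'
  have hge : γ' = fun x y z => a x * b y * c z := by
    funext x y z; exact he x y z
  rw [hge]
  exact sign_le_qSup M ha hb hc

lemma abs_double_sum_bound {N : ℕ} (α T : Fin N → Fin N → ℝ) (hα : ∀ x y, |α x y| ≤ 1) :
    |∑ x, ∑ y, α x y * T x y| ≤ ∑ x, ∑ y, |T x y| := by
  refine le_trans (Finset.abs_sum_le_sum_abs _ _) (Finset.sum_le_sum (fun x _ => ?_))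
  refine le_trans (Finset.abs_sum_le_sum_abs _ _) (Finset.sum_le_sum (fun y _ => ?_))
  rw [abs_mul]
  calc |α x y| * |T x y| ≤ 1 * |T x y| :=
        mul_le_mul_of_nonneg_right (hα x y) (abs_nonneg _)
    _ = |T x y| := one_mul _

lemma sum_rot {N : ℕ} (f : Fin N → Fin N → Fin N → ℝ) :
    ∑ y, ∑ z, ∑ x, f x y z = ∑ x, ∑ y, ∑ z, f x y z :=
  calc ∑ y, ∑ z, ∑ x, f x y z
      = ∑ y, ∑ x, ∑ z, f x y z := Finset.sum_congr rfl (fun y _ => Finset.sum_comm)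
    _ = ∑ x, ∑ y, ∑ z, f x y z := Finset.sum_comm

lemma gen_bound {N : ℕ} (M : Fin N → Fin N → Fin N → ℝ) :
    ∀ γ' ∈ BilocCorrGenerators N, |bellVal M γ'| ≤ Real.sqrt (2*N) * lSup M := by
  intro γ' hγ'
  rcases hγ' with (h | h) | h
  · -- γ' x y z = α x y * c z
    obtain ⟨α, c, hα, hc, he⟩ := h
    set T : Fin N → Fin N → ℝ := fun x y => ∑ z, M x y z * c z with hTdef
    have h1 : bellVal M γ' = ∑ x, ∑ y, α x y * T x y := by
      unfold bellVal
      refine Finset.sum_congr rfl (fun x _ => Finset.sum_congr rfl (fun y _ => ?_))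
      rw [hTdef]; dsimp only
      rw [Finset.mul_sum]
      refine Finset.sum_congr rfl (fun z _ => ?_)
      rw [he x y z]; ring
    have hL : ∀ u v : Fin N → ℝ, PM1 u → PM1 v →
        |∑ x, ∑ y, T x y * u x * v y| ≤ lSup M := by
      intro u v hu hv
      have h2 : ∑ x, ∑ y, T x y * u x * v y
          = bellVal M (fun x y z => u x * v y * c z) := by
        unfold bellVal
        refine Finset.sum_congr rfl (fun x _ => Finset.sum_congr rfl (fun y _ => ?_))
        rw [hTdef]; dsimp only
        rw [Finset.sum_mul, Finset.sum_mul]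
        exact Finset.sum_congr rfl (fun z _ => by ring)
      rw [h2]
      exact sign_le_lSup M hu hv hc
    rw [h1]
    exact (abs_double_sum_bound α T hα).trans
      (key_ineq T (lSup M) (lSup_nonneg M) hL)
  · -- γ' x y z = β y z * a x
    obtain ⟨β, a, hβ, ha, he⟩ := h
    set T : Fin N → Fin N → ℝ := fun y z => ∑ x, M x y z * a x with hTdef
    have h1 : bellVal M γ' = ∑ y, ∑ z, β y z * T y z := by
      unfold bellVal
      calc ∑ x, ∑ y, ∑ z, M x y z * γ' x y z
          = ∑ y, ∑ z, ∑ x, M x y z * γ' x y z := (sum_rot _).symm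
        _ = ∑ y, ∑ z, β y z * T y z := by
            refine Finset.sum_congr rfl (fun y _ => Finset.sum_congr rfl (fun z _ => ?_))
            rw [hTdef]; dsimp only
            rw [Finset.mul_sum]
            refine Finset.sum_congr rfl (fun x _ => ?_)
            rw [he x y z]; ring
    have hL : ∀ u v : Fin N → ℝ, PM1 u → PM1 v →
        |∑ y, ∑ z, T y z * u y * v z| ≤ lSup M := by
      intro u v hu hv
      have h2 : ∑ y, ∑ z, T y z * u y * v z
          = bellVal M (fun x y z => a x * u y * v z) := by
        unfold bellVal
        calc ∑ y, ∑ z, T y z * u y * v z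
            = ∑ y, ∑ z, ∑ x, M x y z * (a x * u y * v z) := by
              refine Finset.sum_congr rfl (fun y _ => Finset.sum_congr rfl (fun z _ => ?_))
              rw [hTdef]; dsimp only
              rw [Finset.sum_mul, Finset.sum_mul]
              exact Finset.sum_congr rfl (fun x _ => by ring)
          _ = ∑ x, ∑ y, ∑ z, M x y z * (a x * u y * v z) := sum_rot _
      rw [h2]
      exact sign_le_lSup M ha hu hv
    rw [h1]
    exact (abs_double_sum_bound β T hβ).trans
      (key_ineq T (lSup M) (lSup_nonneg M) hL)
  · -- γ' x y z = δ x z * b y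
    obtain ⟨δ, b, hδ, hb, he⟩ := h
    set T : Fin N → Fin N → ℝ := fun x z => ∑ y, M x y z * b y with hTdef
    have h1 : bellVal M γ' = ∑ x, ∑ z, δ x z * T x z := by
      unfold bellVal
      refine Finset.sum_congr rfl (fun x _ => ?_)
      calc ∑ y, ∑ z, M x y z * γ' x y z
          = ∑ z, ∑ y, M x y z * γ' x y z := Finset.sum_comm
        _ = ∑ z, δ x z * T x z := by
            refine Finset.sum_congr rfl (fun z _ => ?_)
            rw [hTdef]; dsimp only
            rw [Finset.mul_sum]
            refine Finset.sum_congr rfl (fun y _ => ?_)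
            rw [he x y z]; ring
    have hL : ∀ u v : Fin N → ℝ, PM1 u → PM1 v →
        |∑ x, ∑ z, T x z * u x * v z| ≤ lSup M := by
      intro u v hu hv
      have h2 : ∑ x, ∑ z, T x z * u x * v z
          = bellVal M (fun x y z => u x * b y * v z) := by
        unfold bellVal
        refine Finset.sum_congr rfl (fun x _ => ?_)
        calc ∑ z, T x z * u x * v z
            = ∑ z, ∑ y, M x y z * (u x * b y * v z) := by
              refine Finset.sum_congr rfl (fun z _ => ?_)
              rw [hTdef]; dsimp only
              rw [Finset.sum_mul, Finset.sum_mul]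
              exact Finset.sum_congr rfl (fun y _ => by ring)
          _ = ∑ y, ∑ z, M x y z * (u x * b y * v z) := Finset.sum_comm
      rw [h2]
      exact sign_le_lSup M hu hb hv
    rw [h1]
    exact (abs_double_sum_bound δ T hδ).trans
      (key_ineq T (lSup M) (lSup_nonneg M) hL)
/-- for every `N` and every tripartite Bell functional `M`, the supremum of
`|⟨M,γ⟩|` over tripartite general bilocal correlations is at most `√(2N)` times its
supremum over tripartite fully local correlations, and consequently also at most `√(2N)`
times its supremum over tripartite quantum correlations. -/
theorem unbounded_bell_stmt4 (N : ℕ) (M : Fin N → Fin N → Fin N → ℝ) :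
    bSup M ≤ Real.sqrt (2 * N) * lSup M ∧ bSup M ≤ Real.sqrt (2 * N) * qSup M := by
  have h1 : bSup M ≤ Real.sqrt (2 * N) * lSup M := by
    refine Real.sSup_le ?_ (mul_nonneg (Real.sqrt_nonneg _) (lSup_nonneg M))
    rintro v ⟨γ, hγ, rfl⟩
    exact hull_bellVal_bound M (gen_bound M) γ hγ
  refine ⟨h1, h1.trans ?_⟩
  exact mul_le_mul_of_nonneg_left (lSup_le_qSup M) (Real.sqrt_nonneg _)

end BellCorr
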